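/- For every ε ∈ (0, 1/300), w.h.p. G ∼ H^3(n,p) satisfies the following for every set W ⊆ V(G) and every set of pairs P ⊆ binom(V(G)∖W, 2): (i) if |W| ≤ |P| ≤ ε^{-3}·log n/p then e_G(P, W) ≤ ε^{-4}·|P|·log n; (ii) if |W|, |P| ≥ ε^{-3}·log n/p then e_G(P, W) ≤ (1+ε)·|P|·|W|·p. -/
import Mathlib


open Finset

/-- The set of all 3-element subsets of `Fin n` (potential edges of a 3-uniform
hypergraph on vertex set `[n]`). -/
def triples (n : ℕ) : Finset (Finset (Fin n)) := Finset.univ.powersetCard 3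

open Classical in
/-- The probability that the binomial random 3-uniform hypergraph `H³(n,p)`
(each 3-set an edge independently with probability `p`) satisfies `P`. -/
noncomputable def probH3 (n : ℕ) (p : ℝ) (P : Finset (Finset (Fin n)) → Prop) : ℝ :=
  ∑ G ∈ (triples n).powerset,
    if P G then p ^ G.card * (1 - p) ^ ((triples n).card - G.card) else 0

open Classical in
/-- The probability, over the joint (independent) choice of `H³(n,p)` and of a
uniformly random `m`-element vertex subset `W`, that `P` holds. -/
noncomputable def probH3W (n : ℕ) (p : ℝ) (m : ℕ)
    (P : Finset (Finset (Fin n)) → Finset (Fin n) → Prop) : ℝ :=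
  ∑ G ∈ (triples n).powerset, ∑ W ∈ (Finset.univ : Finset (Fin n)).powersetCard m,
    if P G W then (p ^ G.card * (1 - p) ^ ((triples n).card - G.card)) / (n.choose m) else 0

variable {α : Type*} [DecidableEq α]

/-- `deg_G(S)`: the number of edges of `G` containing `S`. -/
def degSet (G : Finset (Finset α)) (S : Finset α) : ℕ :=
  (G.filter fun e => S ⊆ e).card

/-- `deg_G(S, W)`: number of edges containing `S` whose remaining vertices lie in `W`. -/
def degSetIn (G : Finset (Finset α)) (S W : Finset α) : ℕ :=
  (G.filter fun e => S ⊆ e ∧ e \ S ⊆ W).card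

/-- `e_G(X,Y,Z)`: the number of triples `(x,y,z) ∈ X × Y × Z` with `{x,y,z} ∈ G`. -/
def tripleCount (G : Finset (Finset α)) (X Y Z : Finset α) : ℕ :=
  ((X ×ˢ Y ×ˢ Z).filter fun t => ({t.1, t.2.1, t.2.2} : Finset α) ∈ G).card

/-- `e_G(Ps, W)`: the number of pairs `(P, w) ∈ Ps × W` with `P ∪ {w} ∈ G`. -/
def pairCount (G : Finset (Finset α)) (Ps : Finset (Finset α)) (W : Finset α) : ℕ :=
  ((Ps ×ˢ W).filter fun q => insert q.2 q.1 ∈ G).card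

/-- `e_G(X, Ps)`: the number of pairs `(x, P) ∈ X × Ps` with `{x} ∪ P ∈ G`. -/
def vertexPairCount (G : Finset (Finset α)) (X : Finset α) (Ps : Finset (Finset α)) : ℕ :=
  ((X ×ˢ Ps).filter fun q => insert q.1 q.2 ∈ G).card

/-- A loose path of length `ℓ` in `G`, with vertex sequence `v 0, …, v (2ℓ)`:
the vertices are distinct and `{v (2i), v (2i+1), v (2i+2)} ∈ G` for all `i < ℓ`. -/
def IsLoosePath (G : Finset (Finset α)) (ℓ : ℕ) (v : ℕ → α) : Prop :=
  (∀ i ≤ 2 * ℓ, ∀ j ≤ 2 * ℓ, v i = v j → i = j) ∧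
  ∀ i < ℓ, ({v (2 * i), v (2 * i + 1), v (2 * i + 2)} : Finset α) ∈ G

/-- The vertex set of a loose path of length `ℓ` with vertex sequence `v`. -/
def pathVerts (ℓ : ℕ) (v : ℕ → α) : Finset α := (Finset.range (2 * ℓ + 1)).image v

/-- The internal vertices of a loose path of length `ℓ` (everything except the two endpoints). -/
def intVerts (ℓ : ℕ) (v : ℕ → α) : Finset α := (Finset.Ioo 0 (2 * ℓ)).image v

/-- `G` has a loose Hamilton cycle: a cyclic ordering `f` of all `n` vertices such
that `{f(2i), f(2i+1), f(2i+2)}` is an edge for every `0 ≤ i < n/2` (indices mod `n`). -/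
def HasLooseHamCycle {n : ℕ} (G : Finset (Finset (Fin n))) : Prop :=
  ∃ f : ZMod n → Fin n, Function.Bijective f ∧
    ∀ i : ℕ, i < n / 2 →
      ({f ((2 * i : ℕ) : ZMod n), f ((2 * i + 1 : ℕ) : ZMod n),
        f ((2 * i + 2 : ℕ) : ZMod n)} : Finset (Fin n)) ∈ G


set_option maxHeartbeats 1000000

noncomputable def wt (n : ℕ) (p : ℝ) (G : Finset (Finset (Fin n))) : ℝ :=
  p ^ G.card * (1 - p) ^ ((triples n).card - G.card)
open Classical in
lemma probH3_eq (n : ℕ) (p : ℝ) (P : Finset (Finset (Fin n)) → Prop) :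
    probH3 n p P = ∑ G ∈ (triples n).powerset, if P G then wt n p G else 0 := rfl

section Helpers
variable {n : ℕ} {p : ℝ}

lemma wt_nonneg (hp0 : 0 ≤ p) (hp1 : p ≤ 1) (G : Finset (Finset (Fin n))) : 0 ≤ wt n p G :=
  mul_nonneg (pow_nonneg hp0 _) (pow_nonneg (by linarith) _)

lemma sum_wt (hp0 : 0 ≤ p) (hp1 : p ≤ 1) :
    ∑ G ∈ (triples n).powerset, wt n p G = 1 := by
  have key := Finset.prod_add (fun _ : Finset (Fin n) => p) (fun _ => 1 - p) (triples n)
  simp only [add_sub_cancel, Finset.prod_const, one_pow] at key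
  rw [eq_comm, key]
  exact Finset.sum_congr rfl fun G hG => by
    rw [Finset.mem_powerset] at hG; rw [wt, Finset.card_sdiff_of_subset hG]

lemma probH3_nonneg (hp0 : 0 ≤ p) (hp1 : p ≤ 1) (P : Finset (Finset (Fin n)) → Prop) :
    0 ≤ probH3 n p P := by
  rw [probH3_eq]
  exact Finset.sum_nonneg fun G _ => by
    split_ifs
    · exact wt_nonneg hp0 hp1 G
    · exact le_refl 0

lemma probH3_mono {P Q : Finset (Finset (Fin n)) → Prop}
    (hp0 : 0 ≤ p) (hp1 : p ≤ 1) (h : ∀ G, P G → Q G) :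
    probH3 n p P ≤ probH3 n p Q := by
  rw [probH3_eq, probH3_eq]
  apply Finset.sum_le_sum
  intro G _
  by_cases hP : P G
  · rw [if_pos hP, if_pos (h G hP)]
  · rw [if_neg hP]
    split_ifs
    · exact wt_nonneg hp0 hp1 G
    · exact le_refl 0

lemma probH3_false : probH3 n p (fun _ => False) = 0 := by
  rw [probH3_eq]; simp

lemma probH3_compl (hp0 : 0 ≤ p) (hp1 : p ≤ 1) (P : Finset (Finset (Fin n)) → Prop) :
    probH3 n p P = 1 - probH3 n p (fun G => ¬ P G) := by
  have : probH3 n p P + probH3 n p (fun G => ¬ P G) = 1 := by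
    rw [probH3_eq, probH3_eq, ← Finset.sum_add_distrib, ← sum_wt hp0 hp1 (p := p) (n := n)]
    apply Finset.sum_congr rfl
    intro G _
    by_cases hP : P G
    · rw [if_pos hP, if_neg (not_not_intro hP), add_zero]
    · rw [if_neg hP, if_pos hP, zero_add]
  linarith

lemma probH3_or (hp0 : 0 ≤ p) (hp1 : p ≤ 1) (P Q : Finset (Finset (Fin n)) → Prop) :
    probH3 n p (fun G => P G ∨ Q G) ≤ probH3 n p P + probH3 n p Q := by
  rw [probH3_eq, probH3_eq, probH3_eq, ← Finset.sum_add_distrib]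
  apply Finset.sum_le_sum
  intro G _
  have hw := wt_nonneg hp0 hp1 (p := p) G
  by_cases hP : P G <;> by_cases hQ : Q G <;> simp [hP, hQ, hw] <;> linarith

lemma probH3_union {ι : Type*} (I : Finset ι) {P : Finset (Finset (Fin n)) → Prop}
    {Q : ι → Finset (Finset (Fin n)) → Prop}
    (hp0 : 0 ≤ p) (hp1 : p ≤ 1)
    (h : ∀ G ∈ (triples n).powerset, P G → ∃ i ∈ I, Q i G) :
    probH3 n p P ≤ ∑ i ∈ I, probH3 n p (Q i) := by
  classical
  simp only [probH3_eq]
  rw [Finset.sum_comm]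
  apply Finset.sum_le_sum
  intro G hG
  have hw := wt_nonneg hp0 hp1 (p := p) G
  by_cases hP : P G
  · obtain ⟨i, hi, hQi⟩ := h G hG hP
    rw [if_pos hP]
    calc wt n p G = ∑ j ∈ {i}, if Q j G then wt n p G else 0 := by simp [hQi]
      _ ≤ ∑ j ∈ I, if Q j G then wt n p G else 0 := by
          apply Finset.sum_le_sum_of_subset_of_nonneg (by simpa using hi)
          intro j _ _; split_ifs <;> simp [hw]
  · rw [if_neg hP]
    apply Finset.sum_nonneg
    intro j _; split_ifs <;> simp [hw]

lemma probH3_zero_p {P : Finset (Finset (Fin n)) → Prop}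
    (h : ∀ G, P G → G.Nonempty) : probH3 n 0 P = 0 := by
  rw [probH3_eq]
  apply Finset.sum_eq_zero
  intro G _
  split_ifs with hP
  · have := h G hP
    rw [wt, zero_pow (by simpa [Finset.card_eq_zero] using this.ne_empty), zero_mul]
  · rfl

lemma sum_wt_exp (hp0 : 0 ≤ p) (hp1 : p ≤ 1) {T : Finset (Finset (Fin n))}
    (hT : T ⊆ triples n) (t : ℝ) :
    ∑ G ∈ (triples n).powerset, wt n p G * Real.exp (t * (G ∩ T).card)
      = (p * Real.exp t + (1 - p)) ^ T.card := by
  classical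
  have key := Finset.prod_add
    (fun e : Finset (Fin n) => if e ∈ T then p * Real.exp t else p)
    (fun _ => 1 - p) (triples n)
  have hL : ∏ e ∈ triples n, ((if e ∈ T then p * Real.exp t else p) + (1 - p))
      = (p * Real.exp t + (1 - p)) ^ T.card := by
    rw [← Finset.prod_sdiff hT]
    have h1 : ∏ e ∈ triples n \ T, ((if e ∈ T then p * Real.exp t else p) + (1 - p)) = 1 := by
      apply Finset.prod_eq_one
      intro e he
      rw [if_neg (Finset.mem_sdiff.mp he).2]
      ring
    have h2 : ∏ e ∈ T, ((if e ∈ T then p * Real.exp t else p) + (1 - p))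
        = (p * Real.exp t + (1 - p)) ^ T.card := by
      rw [Finset.prod_congr rfl (fun e he => by rw [if_pos he]), Finset.prod_const]
    rw [h1, h2, one_mul]
  rw [← hL, key]
  apply Finset.sum_congr rfl
  intro G hG
  rw [Finset.mem_powerset] at hG
  have hsplit : ∏ e ∈ G, (if e ∈ T then p * Real.exp t else p)
      = (p * Real.exp t) ^ (G ∩ T).card * p ^ (G \ T).card := by
    have e1 : G.filter (· ∈ T) = G ∩ T := Finset.filter_mem_eq_inter
    have e2 : G.filter (fun e => e ∉ T) = G \ T := (Finset.sdiff_eq_filter G T).symm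
    rw [Finset.prod_ite, Finset.prod_const, Finset.prod_const, e1, e2]
  rw [hsplit, Finset.prod_const, wt, Finset.card_sdiff_of_subset hG]
  have hcard : (G ∩ T).card + (G \ T).card = G.card := by
    rw [Finset.card_inter_add_card_sdiff]
  rw [mul_pow, ← Real.exp_nat_mul]
  rw [show (p ^ (G ∩ T).card * Real.exp ((G ∩ T).card * t) * p ^ (G \ T).card) * (1-p) ^ ((triples n).card - G.card)
    = (p ^ (G ∩ T).card * p ^ (G \ T).card) * (1-p) ^ ((triples n).card - G.card) * Real.exp ((G ∩ T).card * t) by ring]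
  rw [← pow_add, hcard, mul_comm t]

lemma chernoff (hp0 : 0 ≤ p) (hp1 : p ≤ 1) {T : Finset (Finset (Fin n))}
    (hT : T ⊆ triples n) {t k : ℝ} (ht : 0 ≤ t) :
    probH3 n p (fun G => k ≤ ((G ∩ T).card : ℝ))
      ≤ Real.exp (p * (Real.exp t - 1) * T.card - t * k) := by
  classical
  rw [probH3_eq]
  have hwn : ∀ G : Finset (Finset (Fin n)), 0 ≤ wt n p G := fun G =>
    mul_nonneg (pow_nonneg hp0 _) (pow_nonneg (by linarith) _)
  have step1 : (∑ G ∈ (triples n).powerset, if k ≤ ((G ∩ T).card : ℝ) then wt n p G else 0)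
      ≤ ∑ G ∈ (triples n).powerset, Real.exp (-(t*k)) * (wt n p G * Real.exp (t * (G ∩ T).card)) := by
    apply Finset.sum_le_sum
    intro G _
    split_ifs with h
    · have h1 : (1:ℝ) ≤ Real.exp (t * (G ∩ T).card - t * k) := by
        rw [Real.one_le_exp_iff]
        have := mul_le_mul_of_nonneg_left h ht
        linarith [mul_le_mul_of_nonneg_left h ht]
      calc wt n p G = wt n p G * 1 := by ring
        _ ≤ wt n p G * Real.exp (t * (G ∩ T).card - t * k) :=
            mul_le_mul_of_nonneg_left h1 (hwn G)
        _ = Real.exp (-(t*k)) * (wt n p G * Real.exp (t * (G ∩ T).card)) := by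
            rw [Real.exp_sub]; rw [Real.exp_neg]; ring
    · exact mul_nonneg (Real.exp_pos _).le (mul_nonneg (hwn G) (Real.exp_pos _).le)
  have step2 := sum_wt_exp hp0 hp1 hT t
  rw [← Finset.mul_sum] at step1
  rw [step2] at step1
  refine step1.trans ?_
  have hbase : 0 ≤ p * Real.exp t + (1 - p) := by
    have := mul_nonneg hp0 (Real.exp_pos t).le; linarith
  have h3 : (p * Real.exp t + (1 - p)) ^ T.card ≤ Real.exp (p * (Real.exp t - 1) * T.card) := by
    have h4 : p * Real.exp t + (1 - p) ≤ Real.exp (p * (Real.exp t - 1)) := by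
      have := Real.add_one_le_exp (p * (Real.exp t - 1))
      linarith
    calc (p * Real.exp t + (1 - p)) ^ T.card ≤ (Real.exp (p * (Real.exp t - 1))) ^ T.card :=
          pow_le_pow_left₀ hbase h4 _
      _ = Real.exp (p * (Real.exp t - 1) * T.card) := by
          rw [← Real.exp_nat_mul]; ring_nf
  calc Real.exp (-(t*k)) * (p * Real.exp t + (1 - p)) ^ T.card
      ≤ Real.exp (-(t*k)) * Real.exp (p * (Real.exp t - 1) * T.card) :=
        mul_le_mul_of_nonneg_left h3 (Real.exp_pos _).le
    _ = Real.exp (p * (Real.exp t - 1) * T.card - t * k) := by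
        rw [← Real.exp_add]; ring_nf

end Helpers

section PairT
variable {n : ℕ} {Ps : Finset (Finset (Fin n))} {W : Finset (Fin n)}
variable (hPs : ∀ e ∈ Ps, e.card = 2 ∧ Disjoint e W)

def pairT (Ps : Finset (Finset (Fin n))) (W : Finset (Fin n)) : Finset (Finset (Fin n)) :=
  (Ps ×ˢ W).image fun q => insert q.2 q.1

include hPs

lemma pair_injOn :
    Set.InjOn (fun q : Finset (Fin n) × Fin n => insert q.2 q.1)
      ((Ps ×ˢ W : Finset _) : Set _) := by
  rintro ⟨P, w⟩ hq ⟨P', w'⟩ hq' heq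
  simp only [Finset.coe_product, Set.mem_prod, Finset.mem_coe] at hq hq'
  obtain ⟨hP, hw⟩ := hq
  obtain ⟨hP', hw'⟩ := hq'
  simp only at heq
  have hwP : w ∉ P := fun h => (Finset.disjoint_left.mp (hPs P hP).2) h hw
  have hwP' : w' ∉ P' := fun h => (Finset.disjoint_left.mp (hPs P' hP').2) h hw'
  have hww : w = w' := by
    have h1 : w ∈ insert w' P' := heq ▸ Finset.mem_insert_self w P
    rcases Finset.mem_insert.mp h1 with h | h
    · exact h
    · exact absurd h (fun hc => (Finset.disjoint_left.mp (hPs P' hP').2) hc hw)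
  subst hww
  have : P = P' := by
    have := congrArg (fun s => Finset.erase s w) heq
    simpa [Finset.erase_insert hwP, Finset.erase_insert hwP'] using this
  simp [this]

lemma pairT_card : (pairT Ps W).card = Ps.card * W.card := by
  rw [pairT, Finset.card_image_of_injOn (pair_injOn hPs), Finset.card_product]

lemma pairT_subset : pairT Ps W ⊆ triples n := by
  intro e he
  rw [pairT, Finset.mem_image] at he
  obtain ⟨⟨P, w⟩, hq, rfl⟩ := he
  rw [Finset.mem_product] at hq
  have hwP : w ∉ P := fun h => (Finset.disjoint_left.mp (hPs P hq.1).2) h hq.2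
  rw [triples, Finset.mem_powersetCard]
  exact ⟨Finset.subset_univ _, by rw [Finset.card_insert_of_notMem hwP, (hPs P hq.1).1]⟩

lemma pairCount_eq (G : Finset (Finset (Fin n))) :
    pairCount G Ps W = (G ∩ pairT Ps W).card := by
  classical
  rw [pairCount]
  have himg : ((Ps ×ˢ W).filter fun q => insert q.2 q.1 ∈ G).image
      (fun q : Finset (Fin n) × Fin n => insert q.2 q.1) = G ∩ pairT Ps W := by
    ext e
    simp only [Finset.mem_image, Finset.mem_filter, Finset.mem_inter, pairT]
    constructor
    · rintro ⟨q, ⟨hq, hg⟩, rfl⟩; exact ⟨hg, ⟨q, hq, rfl⟩⟩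
    · rintro ⟨hg, q, hq, rfl⟩; exact ⟨q, ⟨hq, hg⟩, rfl⟩
  rw [← himg, Finset.card_image_of_injOn
    ((pair_injOn hPs).mono (by exact_mod_cast Finset.filter_subset _ _))]

end PairT

lemma sum_powerset_geom {β : Type*} [DecidableEq β] (s : Finset β) (x : ℝ) :
    ∑ t ∈ s.powerset, x ^ t.card = (1 + x) ^ s.card := by
  have key := Finset.prod_add (fun _ : β => x) (fun _ => (1:ℝ)) s
  simp only [Finset.prod_const, one_pow, mul_one] at key
  rw [add_comm x 1] at key
  rw [← key]

lemma exp5lt : Real.exp 5 < 300 := by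
  have h := Real.exp_one_lt_d9
  have : Real.exp 5 = (Real.exp 1)^5 := by
    rw [← Real.exp_nat_mul]; norm_num
  rw [this]
  calc (Real.exp 1)^5 < 2.7182818286^5 := by
        apply pow_lt_pow_left₀ h (Real.exp_pos 1).le; norm_num
    _ < 300 := by norm_num

section Eps
variable {ε : ℝ} (hε : 0 < ε) (hε' : ε < 1/300)
include hε hε'

lemma epsE : (300:ℝ) ≤ ε⁻¹ := by
  have h1 : ε * 300 < 1 := by linarith
  have h2 : ε * ε⁻¹ = 1 := mul_inv_cancel₀ hε.ne'
  nlinarith [inv_pos.mpr hε]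

lemma eps_zpow3 : ε ^ (-3:ℤ) = (ε⁻¹)^3 := by
  rw [show (-3:ℤ) = -(3:ℕ) by norm_num, zpow_neg, zpow_natCast, inv_pow]

lemma eps_zpow4 : ε ^ (-4:ℤ) = (ε⁻¹)^4 := by
  rw [show (-4:ℤ) = -(4:ℕ) by norm_num, zpow_neg, zpow_natCast, inv_pow]

lemma eps_t1 : 4 ≤ -(1 + Real.log ε) := by
  have h1 : ε < Real.exp (-5) := by
    rw [Real.exp_neg]
    have h2 : (300:ℝ)⁻¹ ≤ (Real.exp 5)⁻¹ :=
      inv_anti₀ (Real.exp_pos 5) exp5lt.le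
    calc ε < 1/300 := hε'
      _ = (300:ℝ)⁻¹ := by norm_num
      _ ≤ (Real.exp 5)⁻¹ := h2
  have := Real.log_lt_log hε h1
  rw [Real.log_exp] at this
  linarith

lemma eps_expt1 : Real.exp (-(1 + Real.log ε)) ≤ ε⁻¹ := by
  have h1 : Real.exp (-(1 + Real.log ε)) ≤ Real.exp (-Real.log ε) := by
    apply Real.exp_le_exp.mpr; linarith
  have h2 : Real.exp (-Real.log ε) = ε⁻¹ := by rw [Real.exp_neg, Real.exp_log hε]
  linarith

lemma eps_exp_half : Real.exp (ε/2) ≤ 1 + ε/2 + (3/4)*(ε/2)^2 := by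
  have hx : |ε/2| ≤ 1 := by rw [abs_of_pos (by linarith)]; linarith
  have h := Real.exp_bound hx (by norm_num : 0 < 2)
  have hsum : ∑ m ∈ Finset.range 2, (ε/2) ^ m / (m.factorial : ℝ) = 1 + ε/2 := by
    simp [Finset.sum_range_succ]
  rw [hsum] at h
  norm_num [Nat.factorial] at h
  have h2 := abs_le.mp h
  nlinarith [h2.2]

end Eps

section BadBounds
variable {n : ℕ} {p ε : ℝ}

lemma log_ge_one (hn : 3 ≤ n) : 1 ≤ Real.log n := by
  have hn0 : (0:ℝ) < n := by
    have : (3:ℝ) ≤ n := by exact_mod_cast hn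
    linarith
  rw [Real.le_log_iff_exp_le hn0]
  have : (3:ℝ) ≤ n := by exact_mod_cast hn
  calc Real.exp 1 ≤ 2.7182818286 := Real.exp_one_lt_d9.le
    _ ≤ 3 := by norm_num
    _ ≤ n := this

lemma exp_neg_mul_log (hn : 0 < n) (c : ℕ) :
    Real.exp (-((c:ℝ) * Real.log n)) = ((n:ℝ) ^ c)⁻¹ := by
  rw [Real.exp_neg, Real.exp_nat_mul, Real.exp_log (by exact_mod_cast hn)]

lemma bad1_bound (hp0 : 0 ≤ p) (hp1 : p ≤ 1) (hε : 0 < ε) (hε' : ε < 1/300)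
    (hn : 3 ≤ n) (W : Finset (Fin n)) (Ps : Finset (Finset (Fin n))) :
    probH3 n p (fun G =>
      (∀ e ∈ Ps, e.card = 2 ∧ Disjoint e W) ∧
      (W.card ≤ Ps.card ∧ (Ps.card:ℝ) ≤ ε ^ (-3:ℤ) * Real.log n / p) ∧
      ε ^ (-4:ℤ) * Ps.card * Real.log n < (pairCount G Ps W : ℝ))
    ≤ ((n:ℝ) ^ (2*Ps.card + W.card + 4))⁻¹ := by
  classical
  have hn0 : 0 < n := by omega
  have hn0' : (0:ℝ) < n := by exact_mod_cast hn0
  have hinv : (0:ℝ) ≤ ((n:ℝ) ^ (2*Ps.card + W.card + 4))⁻¹ := by positivity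
  have hL := log_ge_one hn
  set L := Real.log n with hLdef
  by_cases hc : (∀ e ∈ Ps, e.card = 2 ∧ Disjoint e W) ∧
      (W.card ≤ Ps.card ∧ (Ps.card:ℝ) ≤ ε ^ (-3:ℤ) * L / p) ∧ 1 ≤ Ps.card
  swap
  · refine le_trans (le_of_eq ?_) hinv
    rw [← probH3_false (n := n) (p := p)]
    rw [probH3_eq, probH3_eq]
    apply Finset.sum_congr rfl
    intro G _
    have : ¬ ((∀ e ∈ Ps, e.card = 2 ∧ Disjoint e W) ∧
      (W.card ≤ Ps.card ∧ (Ps.card:ℝ) ≤ ε ^ (-3:ℤ) * L / p) ∧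
      ε ^ (-4:ℤ) * Ps.card * L < (pairCount G Ps W : ℝ)) := by
      rintro ⟨h1, h2, h3⟩
      by_cases hm0 : 1 ≤ Ps.card
      · exact hc ⟨h1, h2, hm0⟩
      · have hPse : Ps = ∅ := by
          rw [← Finset.card_eq_zero]; omega
        rw [hPse] at h3
        simp [pairCount] at h3
    rw [if_neg this, if_neg (fun h => h.elim)]
  obtain ⟨hPs, ⟨hwm, hmle⟩, hm1⟩ := hc
  set a := (Ps.card : ℝ) with hadef
  set b := (W.card : ℝ) with hbdef
  have ha1 : (1:ℝ) ≤ a := by rw [hadef]; exact_mod_cast hm1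
  have hba : b ≤ a := by rw [hadef, hbdef]; exact_mod_cast hwm
  have hb0 : (0:ℝ) ≤ b := Nat.cast_nonneg _
  have ha0 : (0:ℝ) ≤ a := by linarith
  have hL0 : (0:ℝ) ≤ L := by linarith
  have hp_pos : 0 < p := by
    rcases lt_or_eq_of_le hp0 with h | h
    · exact h
    · exfalso
      rw [← h, div_zero] at hmle
      linarith
  have hE := epsE hε hε'
  have hE0 : (0:ℝ) ≤ ε⁻¹ := by linarith
  have hap : a * p ≤ (ε⁻¹)^3 * L := by
    rw [← eps_zpow3 hε hε']
    exact (le_div_iff₀ hp_pos).mp hmle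
  set t1 := -(1 + Real.log ε) with ht1def
  have ht1 : 4 ≤ t1 := eps_t1 hε hε'
  have hq : Real.exp t1 ≤ ε⁻¹ := eps_expt1 hε hε'
  have hq1 : 1 ≤ Real.exp t1 := by
    rw [Real.one_le_exp_iff]; linarith
  set k := ε ^ (-4:ℤ) * a * L with hkdef
  have step : probH3 n p (fun G =>
      (∀ e ∈ Ps, e.card = 2 ∧ Disjoint e W) ∧
      (W.card ≤ Ps.card ∧ (Ps.card:ℝ) ≤ ε ^ (-3:ℤ) * L / p) ∧
      ε ^ (-4:ℤ) * Ps.card * L < (pairCount G Ps W : ℝ))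
      ≤ probH3 n p (fun G => k ≤ ((G ∩ pairT Ps W).card : ℝ)) := by
    apply probH3_mono hp0 hp1
    rintro G ⟨h1, _, h3⟩
    rw [pairCount_eq h1] at h3
    exact h3.le
  refine step.trans ?_
  have ch := chernoff hp0 hp1 (pairT_subset hPs) (t := t1) (k := k) (by linarith)
  rw [pairT_card hPs] at ch
  refine ch.trans ?_
  have hfinal : p * (Real.exp t1 - 1) * ((Ps.card * W.card : ℕ):ℝ) - t1 * k
      ≤ -(((2*Ps.card + W.card + 4 : ℕ)):ℝ) * L := by
    rw [hkdef, eps_zpow4 hε hε']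
    push_cast
    set q := Real.exp t1
    -- facts
    have g1 : ((q-1)*b) * (a*p) ≤ ((q-1)*b) * ((ε⁻¹)^3*L) :=
      mul_le_mul_of_nonneg_left hap (by nlinarith)
    have g2 : (q-1)*b ≤ ε⁻¹*a := by nlinarith
    have g3 : ((q-1)*b)*((ε⁻¹)^3*L) ≤ (ε⁻¹*a)*((ε⁻¹)^3*L) :=
      mul_le_mul_of_nonneg_right g2 (by positivity)
    have G1 : p * (q - 1) * (a*b) ≤ (ε⁻¹)^4*(a*L) := by nlinarith [g1, g3]
    have G2 : 4*((ε⁻¹)^4*a*L) ≤ t1*((ε⁻¹)^4*a*L) :=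
      mul_le_mul_of_nonneg_right ht1 (by positivity)
    have h300 : (300:ℝ)^4 ≤ (ε⁻¹)^4 := pow_le_pow_left₀ (by norm_num) hE 4
    have G3 : 7*(a*L) ≤ 3*((ε⁻¹)^4*(a*L)) := by nlinarith [mul_nonneg ha0 hL0]
    have hbL : b*L ≤ a*L := mul_le_mul_of_nonneg_right hba hL0
    have hLa : 1*L ≤ a*L := mul_le_mul_of_nonneg_right ha1 hL0
    nlinarith [G1, G2, G3, hbL, hLa]
  calc Real.exp (p * (Real.exp t1 - 1) * ((Ps.card * W.card : ℕ):ℝ) - t1 * k)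
      ≤ Real.exp (-(((2*Ps.card + W.card + 4 : ℕ)):ℝ) * L) := Real.exp_le_exp.mpr (by linarith)
    _ = ((n:ℝ) ^ (2*Ps.card + W.card + 4))⁻¹ := by
        rw [hLdef, ← exp_neg_mul_log hn0 (2*Ps.card + W.card + 4)]
        ring_nf

end BadBounds

section Bad2
variable {n : ℕ} {p ε : ℝ}

lemma bad2_bound (hp0 : 0 ≤ p) (hp1 : p ≤ 1) (hε : 0 < ε) (hε' : ε < 1/300)
    (hn : 3 ≤ n) (W : Finset (Fin n)) (Ps : Finset (Finset (Fin n))) :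
    probH3 n p (fun G =>
      (∀ e ∈ Ps, e.card = 2 ∧ Disjoint e W) ∧
      (ε ^ (-3:ℤ) * Real.log n / p ≤ (W.card:ℝ) ∧
        ε ^ (-3:ℤ) * Real.log n / p ≤ (Ps.card:ℝ)) ∧
      (1+ε) * Ps.card * W.card * p < (pairCount G Ps W : ℝ))
    ≤ ((n:ℝ) ^ (2*Ps.card + W.card + 4))⁻¹ := by
  classical
  have hn0 : 0 < n := by omega
  have hn0' : (0:ℝ) < n := by exact_mod_cast hn0
  have hinv : (0:ℝ) ≤ ((n:ℝ) ^ (2*Ps.card + W.card + 4))⁻¹ := by positivity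
  have hL := log_ge_one hn
  set L := Real.log (n:ℝ) with hLdef
  rcases eq_or_lt_of_le hp0 with hp00 | hp_pos
  · rw [← hp00]
    refine le_trans (le_of_eq (probH3_zero_p ?_)) hinv
    rintro G ⟨h1, h2, h3⟩
    rw [mul_zero] at h3
    have h3c : 0 < pairCount G Ps W := by exact_mod_cast h3
    simp only [pairCount] at h3c
    obtain ⟨q, hq⟩ := Finset.card_pos.mp h3c
    exact ⟨insert q.2 q.1, (Finset.mem_filter.mp hq).2⟩
  by_cases hc : (∀ e ∈ Ps, e.card = 2 ∧ Disjoint e W) ∧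
      (ε ^ (-3:ℤ) * L / p ≤ (W.card:ℝ) ∧ ε ^ (-3:ℤ) * L / p ≤ (Ps.card:ℝ))
  swap
  · refine le_trans (le_of_eq ?_) hinv
    rw [← probH3_false (n := n) (p := p)]
    rw [probH3_eq, probH3_eq]
    apply Finset.sum_congr rfl
    intro G _
    rw [if_neg (fun h => hc ⟨h.1, h.2.1⟩), if_neg (fun h => h.elim)]
  obtain ⟨hPs, hw, hm⟩ := hc
  set a := (Ps.card : ℝ) with hadef
  set b := (W.card : ℝ) with hbdef
  have ha0 : (0:ℝ) ≤ a := by rw [hadef]; exact Nat.cast_nonneg _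
  have hb0 : (0:ℝ) ≤ b := by rw [hbdef]; exact Nat.cast_nonneg _
  have hL0 : (0:ℝ) ≤ L := by linarith
  have hE := epsE hε hε'
  have hE0 : (0:ℝ) ≤ ε⁻¹ := by linarith
  have hbp : (ε⁻¹)^3*L ≤ b*p := by
    have := (div_le_iff₀ hp_pos).mp hw
    rw [eps_zpow3 hε hε'] at this
    linarith
  have hap : (ε⁻¹)^3*L ≤ a*p := by
    have := (div_le_iff₀ hp_pos).mp hm
    rw [eps_zpow3 hε hε'] at this
    linarith
  have h13 : (1:ℝ) ≤ (ε⁻¹)^3 := by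
    have := pow_le_pow_left₀ (by norm_num : (0:ℝ) ≤ 1) (le_trans (by norm_num) hE) 3
    simpa using this
  have hE3L : (1:ℝ) ≤ (ε⁻¹)^3*L := by nlinarith
  have ha1 : (1:ℝ) ≤ a := by nlinarith [mul_le_mul_of_nonneg_left hp1 ha0]
  have hb1 : (1:ℝ) ≤ b := by nlinarith [mul_le_mul_of_nonneg_left hp1 hb0]
  set k := (1+ε) * a * b * p with hkdef
  have step : probH3 n p (fun G =>
      (∀ e ∈ Ps, e.card = 2 ∧ Disjoint e W) ∧
      (ε ^ (-3:ℤ) * L / p ≤ b ∧ ε ^ (-3:ℤ) * L / p ≤ a) ∧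
      k < (pairCount G Ps W : ℝ))
      ≤ probH3 n p (fun G => k ≤ ((G ∩ pairT Ps W).card : ℝ)) := by
    apply probH3_mono hp0 hp1
    rintro G ⟨h1, _, h3⟩
    rw [pairCount_eq h1] at h3
    exact h3.le
  refine step.trans ?_
  have ch := chernoff hp0 hp1 (pairT_subset hPs) (t := ε/2) (k := k) (by linarith)
  rw [pairT_card hPs] at ch
  refine ch.trans ?_
  have hfinal : p * (Real.exp (ε/2) - 1) * ((Ps.card * W.card : ℕ):ℝ) - (ε/2) * k
      ≤ -(((2*Ps.card + W.card + 4 : ℕ)):ℝ) * L := by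
    rw [hkdef]
    push_cast
    have hεE : ε * ε⁻¹ = 1 := mul_inv_cancel₀ hε.ne'
    have hcube : ε^2*(ε⁻¹)^3 = ε⁻¹ := by
      calc ε^2*(ε⁻¹)^3 = (ε*ε⁻¹)^2*ε⁻¹ := by ring
        _ = ε⁻¹ := by rw [hεE]; ring
    have habp : (0:ℝ) ≤ a*b*p := by positivity
    have hq2 := eps_exp_half hε hε'
    have hc2 : Real.exp (ε/2) - 1 - ε/2 - ε*ε/2 ≤ -(5/16)*(ε*ε) := by nlinarith
    have key1 := mul_le_mul_of_nonneg_left hc2 habp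
    have haux1 : a*((ε⁻¹)^3*L) ≤ a*(b*p) := mul_le_mul_of_nonneg_left hbp ha0
    have haux2 : b*((ε⁻¹)^3*L) ≤ b*(a*p) := mul_le_mul_of_nonneg_left hap hb0
    have F1 : ε⁻¹*(a*L) ≤ ε^2*(a*b*p) := by
      calc ε⁻¹*(a*L) = (ε^2*(ε⁻¹)^3)*(a*L) := by rw [hcube]
        _ = ε^2*(a*((ε⁻¹)^3*L)) := by ring
        _ ≤ ε^2*(a*(b*p)) := mul_le_mul_of_nonneg_left haux1 (sq_nonneg ε)
        _ = ε^2*(a*b*p) := by ring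
    have F2 : ε⁻¹*(b*L) ≤ ε^2*(a*b*p) := by
      calc ε⁻¹*(b*L) = (ε^2*(ε⁻¹)^3)*(b*L) := by rw [hcube]
        _ = ε^2*(b*((ε⁻¹)^3*L)) := by ring
        _ ≤ ε^2*(b*(a*p)) := mul_le_mul_of_nonneg_left haux2 (sq_nonneg ε)
        _ = ε^2*(a*b*p) := by ring
    have F3 : 300*(a*L) ≤ ε⁻¹*(a*L) :=
      mul_le_mul_of_nonneg_right hE (by positivity)
    have F4 : 300*(b*L) ≤ ε⁻¹*(b*L) :=
      mul_le_mul_of_nonneg_right hE (by positivity)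
    have hLa : 1*L ≤ a*L := mul_le_mul_of_nonneg_right ha1 hL0
    have hbL : 1*L ≤ b*L := mul_le_mul_of_nonneg_right hb1 hL0
    nlinarith [key1, F1, F2, F3, F4, hLa, hbL]
  calc Real.exp (p * (Real.exp (ε/2) - 1) * ((Ps.card * W.card : ℕ):ℝ) - (ε/2) * k)
      ≤ Real.exp (-(((2*Ps.card + W.card + 4 : ℕ)):ℝ) * L) := Real.exp_le_exp.mpr (by linarith)
    _ = ((n:ℝ) ^ (2*Ps.card + W.card + 4))⁻¹ := by
        rw [hLdef, ← exp_neg_mul_log hn0 (2*Ps.card + W.card + 4)]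
        ring_nf

end Bad2

section Assemble
variable {n : ℕ} {p ε : ℝ}

lemma bad_total (hp0 : 0 ≤ p) (hp1 : p ≤ 1) (hε : 0 < ε)
    (hε' : ε < 1/300) (hn : 3 ≤ n) :
    probH3 n p (fun G => ¬ (∀ W : Finset (Fin n), ∀ Ps : Finset (Finset (Fin n)),
      (∀ e ∈ Ps, e.card = 2 ∧ Disjoint e W) →
      ((W.card ≤ Ps.card ∧ (Ps.card : ℝ) ≤ ε ^ (-3 : ℤ) * Real.log n / p) →
        (pairCount G Ps W : ℝ) ≤ ε ^ (-4 : ℤ) * Ps.card * Real.log n) ∧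
      ((ε ^ (-3 : ℤ) * Real.log n / p ≤ (W.card : ℝ) ∧
          ε ^ (-3 : ℤ) * Real.log n / p ≤ (Ps.card : ℝ)) →
        (pairCount G Ps W : ℝ) ≤ (1 + ε) * Ps.card * W.card * p)))
    ≤ 18 / n := by
  classical
  have hn0 : 0 < n := by omega
  have hn0' : (0:ℝ) < n := by exact_mod_cast hn0
  set A : Finset (Finset (Fin n)) := (Finset.univ : Finset (Fin n)).powerset with hA
  set B : Finset (Finset (Finset (Fin n))) :=
    ((Finset.univ : Finset (Fin n)).powersetCard 2).powerset with hB
  set Q : Finset (Fin n) × Finset (Finset (Fin n)) → Finset (Finset (Fin n)) → Prop :=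
    fun i G =>
      ((∀ e ∈ i.2, e.card = 2 ∧ Disjoint e i.1) ∧
        (i.1.card ≤ i.2.card ∧ (i.2.card:ℝ) ≤ ε ^ (-3:ℤ) * Real.log n / p) ∧
        ε ^ (-4:ℤ) * i.2.card * Real.log n < (pairCount G i.2 i.1 : ℝ)) ∨
      ((∀ e ∈ i.2, e.card = 2 ∧ Disjoint e i.1) ∧
        (ε ^ (-3:ℤ) * Real.log n / p ≤ (i.1.card:ℝ) ∧
          ε ^ (-3:ℤ) * Real.log n / p ≤ (i.2.card:ℝ)) ∧
        (1+ε) * i.2.card * i.1.card * p < (pairCount G i.2 i.1 : ℝ)) with hQ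
  have step1 := probH3_union (A ×ˢ B) (p := p) hp0 hp1 (Q := Q)
    (P := fun G => ¬ (∀ W : Finset (Fin n), ∀ Ps : Finset (Finset (Fin n)),
      (∀ e ∈ Ps, e.card = 2 ∧ Disjoint e W) →
      ((W.card ≤ Ps.card ∧ (Ps.card : ℝ) ≤ ε ^ (-3 : ℤ) * Real.log n / p) →
        (pairCount G Ps W : ℝ) ≤ ε ^ (-4 : ℤ) * Ps.card * Real.log n) ∧
      ((ε ^ (-3 : ℤ) * Real.log n / p ≤ (W.card : ℝ) ∧
          ε ^ (-3 : ℤ) * Real.log n / p ≤ (Ps.card : ℝ)) →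
        (pairCount G Ps W : ℝ) ≤ (1 + ε) * Ps.card * W.card * p))) ?_
  swap
  · intro G _ hbad
    push_neg at hbad
    obtain ⟨W, Ps, hyp, hfail⟩ := hbad
    refine ⟨(W, Ps), ?_, ?_⟩
    · rw [Finset.mem_product]
      constructor
      · exact Finset.mem_powerset.mpr (Finset.subset_univ W)
      · rw [hB, Finset.mem_powerset]
        intro e he
        exact Finset.mem_powersetCard.mpr ⟨Finset.subset_univ _, (hyp e he).1⟩
    · rw [hQ]
      by_cases h1 : (W.card ≤ Ps.card ∧ (Ps.card : ℝ) ≤ ε ^ (-3 : ℤ) * Real.log n / p) →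
          (pairCount G Ps W : ℝ) ≤ ε ^ (-4 : ℤ) * Ps.card * Real.log n
      · obtain ⟨h2, h3⟩ := hfail h1
        exact Or.inr ⟨hyp, h2, h3⟩
      · push_neg at h1
        exact Or.inl ⟨hyp, h1.1, h1.2⟩
  refine step1.trans ?_
  have step2 : ∑ i ∈ A ×ˢ B, probH3 n p (Q i)
      ≤ ∑ i ∈ A ×ˢ B, 2 * ((n:ℝ) ^ (2*i.2.card + i.1.card + 4))⁻¹ := by
    apply Finset.sum_le_sum
    intro i _
    have hor := probH3_or hp0 hp1
      (fun G => (∀ e ∈ i.2, e.card = 2 ∧ Disjoint e i.1) ∧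
        (i.1.card ≤ i.2.card ∧ (i.2.card:ℝ) ≤ ε ^ (-3:ℤ) * Real.log n / p) ∧
        ε ^ (-4:ℤ) * i.2.card * Real.log n < (pairCount G i.2 i.1 : ℝ))
      (fun G => (∀ e ∈ i.2, e.card = 2 ∧ Disjoint e i.1) ∧
        (ε ^ (-3:ℤ) * Real.log n / p ≤ (i.1.card:ℝ) ∧
          ε ^ (-3:ℤ) * Real.log n / p ≤ (i.2.card:ℝ)) ∧
        (1+ε) * i.2.card * i.1.card * p < (pairCount G i.2 i.1 : ℝ))
    refine hor.trans ?_
    have b1 := bad1_bound hp0 hp1 hε hε' hn i.1 i.2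
    have b2 := bad2_bound hp0 hp1 hε hε' hn i.1 i.2
    linarith
  refine step2.trans ?_
  have hterm : ∀ i : Finset (Fin n) × Finset (Finset (Fin n)),
      2 * ((n:ℝ) ^ (2*i.2.card + i.1.card + 4))⁻¹
        = (2*((n:ℝ)⁻¹)^4) * (((n:ℝ)⁻¹)^i.1.card * ((((n:ℝ)⁻¹)^2))^i.2.card) := by
    intro i
    rw [← inv_pow, pow_add, pow_add, pow_mul]
    ring
  rw [Finset.sum_congr rfl (fun i _ => hterm i)]
  rw [Finset.sum_product]
  have hfact : ∑ W ∈ A, ∑ Ps ∈ B,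
      (2*((n:ℝ)⁻¹)^4) * (((n:ℝ)⁻¹)^W.card * ((((n:ℝ)⁻¹)^2))^Ps.card)
      = (2*((n:ℝ)⁻¹)^4) * ((∑ W ∈ A, ((n:ℝ)⁻¹)^W.card) *
          (∑ Ps ∈ B, (((n:ℝ)⁻¹)^2)^Ps.card)) := by
    rw [Finset.sum_mul_sum, Finset.mul_sum]
    apply Finset.sum_congr rfl
    intro W _
    rw [Finset.mul_sum]
  rw [hfact]
  have hx0 : (0:ℝ) ≤ (n:ℝ)⁻¹ := by positivity
  have hx1 : (n:ℝ)⁻¹ ≤ 1 := inv_le_one_of_one_le₀ (by exact_mod_cast hn0)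
  have hSA : ∑ W ∈ A, ((n:ℝ)⁻¹)^W.card ≤ 3 := by
    rw [hA, sum_powerset_geom, Finset.card_univ, Fintype.card_fin]
    have h1 : (1+(n:ℝ)⁻¹) ≤ Real.exp ((n:ℝ)⁻¹) := by
      linarith [Real.add_one_le_exp ((n:ℝ)⁻¹)]
    calc (1+(n:ℝ)⁻¹)^n ≤ (Real.exp ((n:ℝ)⁻¹))^n := pow_le_pow_left₀ (by positivity) h1 n
      _ = Real.exp (n * (n:ℝ)⁻¹) := (Real.exp_nat_mul _ n).symm
      _ = Real.exp 1 := by rw [mul_inv_cancel₀ (by positivity : (n:ℝ) ≠ 0)]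
      _ ≤ 3 := by linarith [Real.exp_one_lt_d9]
  have hSA0 : (0:ℝ) ≤ ∑ W ∈ A, ((n:ℝ)⁻¹)^W.card :=
    Finset.sum_nonneg fun W _ => by positivity
  have hC : (((Finset.univ : Finset (Fin n)).powersetCard 2).card : ℝ) ≤ (n:ℝ)^2 := by
    have := Nat.choose_le_pow n 2
    rw [Finset.card_powersetCard, Finset.card_univ, Fintype.card_fin]
    exact_mod_cast this
  have hSB : ∑ Ps ∈ B, (((n:ℝ)⁻¹)^2)^Ps.card ≤ 3 := by
    rw [hB, sum_powerset_geom]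
    have h1 : 1+((n:ℝ)⁻¹)^2 ≤ Real.exp (((n:ℝ)⁻¹)^2) := by
      linarith [Real.add_one_le_exp (((n:ℝ)⁻¹)^2)]
    calc (1+((n:ℝ)⁻¹)^2)^(((Finset.univ : Finset (Fin n)).powersetCard 2).card)
        ≤ (Real.exp (((n:ℝ)⁻¹)^2))^(((Finset.univ : Finset (Fin n)).powersetCard 2).card) :=
          pow_le_pow_left₀ (by positivity) h1 _
      _ = Real.exp ((((Finset.univ : Finset (Fin n)).powersetCard 2).card) * ((n:ℝ)⁻¹)^2) :=
          (Real.exp_nat_mul _ _).symm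
      _ ≤ Real.exp 1 := by
          apply Real.exp_le_exp.mpr
          calc ((((Finset.univ : Finset (Fin n)).powersetCard 2).card):ℝ) * ((n:ℝ)⁻¹)^2
              ≤ (n:ℝ)^2 * ((n:ℝ)⁻¹)^2 := mul_le_mul_of_nonneg_right hC (by positivity)
            _ = 1 := by field_simp
      _ ≤ 3 := by linarith [Real.exp_one_lt_d9]
  have hSB0 : (0:ℝ) ≤ ∑ Ps ∈ B, (((n:ℝ)⁻¹)^2)^Ps.card :=
    Finset.sum_nonneg fun Ps _ => by positivity
  calc (2*((n:ℝ)⁻¹)^4) * ((∑ W ∈ A, ((n:ℝ)⁻¹)^W.card) *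
          (∑ Ps ∈ B, (((n:ℝ)⁻¹)^2)^Ps.card))
      ≤ (2*((n:ℝ)⁻¹)^4) * (3*3) := by
        apply mul_le_mul_of_nonneg_left
          (mul_le_mul hSA hSB hSB0 (by norm_num)) (by positivity)
    _ = 18*((n:ℝ)⁻¹)^4 := by ring
    _ ≤ 18*((n:ℝ)⁻¹)^1 := by
        apply mul_le_mul_of_nonneg_left
          (pow_le_pow_of_le_one hx0 hx1 (by norm_num)) (by norm_num)
    _ = 18/(n:ℝ) := by rw [pow_one, div_eq_mul_inv]
  
end Assemble

/-- Lemma 2.3: edge-count concentration for `e_G(𝒫, W)`, where `𝒫`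
is a family of pairs of vertices avoiding `W`. -/
theorem stmt_3 :
    ∀ ε : ℝ, 0 < ε → ε < 1 / 300 →
    ∀ p : ℕ → ℝ, (∀ n, 0 ≤ p n ∧ p n ≤ 1) →
    Filter.Tendsto
      (fun n : ℕ => probH3 n (p n) (fun G =>
        ∀ W : Finset (Fin n), ∀ Ps : Finset (Finset (Fin n)),
          (∀ e ∈ Ps, e.card = 2 ∧ Disjoint e W) →
          ((W.card ≤ Ps.card ∧ (Ps.card : ℝ) ≤ ε ^ (-3 : ℤ) * Real.log n / p n) →
            (pairCount G Ps W : ℝ) ≤ ε ^ (-4 : ℤ) * Ps.card * Real.log n) ∧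
          ((ε ^ (-3 : ℤ) * Real.log n / p n ≤ (W.card : ℝ) ∧
              ε ^ (-3 : ℤ) * Real.log n / p n ≤ (Ps.card : ℝ)) →
            (pairCount G Ps W : ℝ) ≤ (1 + ε) * Ps.card * W.card * p n)))
      Filter.atTop (nhds 1) := by
  intro ε hε hε' p hp
  have h1 : Filter.Tendsto (fun n : ℕ => probH3 n (p n) (fun G =>
      ¬ (∀ W : Finset (Fin n), ∀ Ps : Finset (Finset (Fin n)),
        (∀ e ∈ Ps, e.card = 2 ∧ Disjoint e W) →
        ((W.card ≤ Ps.card ∧ (Ps.card : ℝ) ≤ ε ^ (-3 : ℤ) * Real.log n / p n) →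
          (pairCount G Ps W : ℝ) ≤ ε ^ (-4 : ℤ) * Ps.card * Real.log n) ∧
        ((ε ^ (-3 : ℤ) * Real.log n / p n ≤ (W.card : ℝ) ∧
            ε ^ (-3 : ℤ) * Real.log n / p n ≤ (Ps.card : ℝ)) →
          (pairCount G Ps W : ℝ) ≤ (1 + ε) * Ps.card * W.card * p n))))
      Filter.atTop (nhds 0) := by
    apply squeeze_zero' (g := fun n : ℕ => 18 / (n:ℝ))
    · filter_upwards with n
      exact probH3_nonneg (hp n).1 (hp n).2 _
    · filter_upwards [Filter.eventually_ge_atTop 3] with n hn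
      exact bad_total (hp n).1 (hp n).2 hε hε' hn
    · exact tendsto_const_div_atTop_nhds_zero_nat 18
  have h2 := Filter.Tendsto.const_sub (1:ℝ) h1
  rw [sub_zero] at h2
  refine h2.congr ?_
  intro n
  exact (probH3_compl (hp n).1 (hp n).2 _).symm
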